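/- Let n ≥ 2. There exist absolute constants c, C > 0 such that for all 0 < σ < 1/2 and all 0 < δ < 1 with 2δ^{1-σ} ≤ 1 and δ^{1-σ} ≤ 1/40, and every (x,t) ∈ Λ, one has c^{n-1} δ^{(n-1)(1-σ)} ≤ |u(x,t)| ≤ C^{n-1} δ^{(n-1)(1-σ)}. -/

import Mathlib

open Real MeasureTheory

/-- The function `g = ∑_{ℓ ∈ ℕ, 1 ≤ ℓ ≤ δ^{-σ}} χ_{(ℓδ^σ-δ, ℓδ^σ+δ)}` from Section 2. -/
noncomputable def g (δ σ : ℝ) (x : ℝ) : ℝ :=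
  ∑ ℓ ∈ Finset.Icc 1 ⌊δ ^ (-σ)⌋₊,
    Set.indicator (Set.Ioo ((ℓ : ℝ) * δ ^ σ - δ) ((ℓ : ℝ) * δ ^ σ + δ)) (fun _ => (1 : ℝ)) x

/-- The solution `u(x,t) = ∫_{ℝ^{n-1}} e^{-πit|ξ|² + 2πi x·ξ} ∏_j g(ξ_j) dξ` of the free
Schrödinger equation with Fourier data `F(ξ) = ∏_j g(ξ_j)`. -/
noncomputable def schrodingerSol (n : ℕ) (δ σ : ℝ)
    (x : EuclideanSpace ℝ (Fin (n-1))) (t : ℝ) : ℂ :=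
  ∫ ξ : EuclideanSpace ℝ (Fin (n-1)),
    Complex.exp (((-(π * t * ‖ξ‖ ^ 2) + 2 * π * (inner ℝ x ξ : ℝ) : ℝ) : ℂ) * Complex.I)
      * ((∏ j, g δ σ (ξ j) : ℝ) : ℂ)

/-! `u` factorises into one-dimensional integrals `u₁(x_j, t) = ∑_ℓ ∫_{I_ℓ} e^{iφ(s)} ds` over the
intervals `I_ℓ` of `g`, with `φ(s) = -πts² + 2πx_j s`. Put `B = δ^{-σ}`. At a point of `Λ`, for
`s = ℓ/B + u ∈ I_ℓ` the phase is `2π(pℓ - qℓ²)` plus a remainder of size at most `π/8`, because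
`pδB ≤ 1/40` and `qδB² ≤ 1/80`. So `cos φ ≥ 1/2` on every `I_ℓ`, each of the `⌊B⌋₊ ∈ [B/2, B]`
intervals contributes real part at least `δ` and modulus at most `2δ`, and
`δ^{1-σ}/2 ≤ |u₁| ≤ 2δ^{1-σ}`. Multiplying over the `n - 1` coordinates gives the claim. -/

theorem half_le_cos_of_abs_le_pi_div_three {ψ : ℝ} (h : |ψ| ≤ π / 3) : 1 / 2 ≤ Real.cos ψ := by
  rw [← Real.cos_abs, ← Real.cos_pi_div_three]
  exact Real.cos_le_cos_of_nonneg_of_le_pi (abs_nonneg ψ) (by linarith [Real.pi_pos]) h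

theorem Nat.half_le_floor {R : Type*} [Field R] [LinearOrder R] [IsStrictOrderedRing R]
    [FloorSemiring R] {a : R} (ha : 1 ≤ a) : a / 2 ≤ ⌊a⌋₊ := by
  have h1 : (1 : R) ≤ ⌊a⌋₊ := by exact_mod_cast Nat.one_le_floor_iff a |>.mpr ha
  linarith [Nat.sub_one_lt_floor a]

theorem EuclideanSpace.integral_prod_apply {𝕜 ι : Type*} [RCLike 𝕜] [Fintype ι]
    (f : ι → ℝ → 𝕜) : ∫ ξ : EuclideanSpace ℝ ι, ∏ i, f i (ξ i) = ∏ i, ∫ s, f i s := by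
  rw [← (PiLp.volume_preserving_toLp ι).integral_comp
    (MeasurableEquiv.toLp 2 (ι → ℝ)).measurableEmbedding]
  exact integral_fintype_prod_volume_eq_prod f

section
variable {X : Type*} [MeasurableSpace X] {μ : Measure X}

theorem integral_mul_sum_indicator_one {ι : Type*} (F : Finset ι) {S : ι → Set X}
    (hS : ∀ i, MeasurableSet (S i)) {f : X → ℂ} (hf : ∀ i ∈ F, IntegrableOn f (S i) μ) :
    ∫ x, f x * ((∑ i ∈ F, (S i).indicator (fun _ => (1 : ℝ)) x : ℝ) : ℂ) ∂μ
      = ∑ i ∈ F, ∫ x in S i, f x ∂μ := by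
  have h : ∀ x, f x * ((∑ i ∈ F, (S i).indicator (fun _ => (1 : ℝ)) x : ℝ) : ℂ)
      = ∑ i ∈ F, (S i).indicator f x := by
    intro x
    simp only [Complex.ofReal_sum, Finset.mul_sum]
    refine Finset.sum_congr rfl fun i _ => ?_
    by_cases hx : x ∈ S i <;> simp [hx]
  simp_rw [h]
  rw [integral_finsetSum _ fun i hi => (hf i hi).integrable_indicator (hS i)]
  exact Finset.sum_congr rfl fun i _ => integral_indicator (hS i)

theorem integrableOn_exp_mul_I {φ : X → ℝ} (hφ : Measurable φ) {s : Set X} (hμs : μ s ≠ ⊤) :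
    IntegrableOn (fun x => Complex.exp (φ x * Complex.I)) s μ := by
  have : IsFiniteMeasure (μ.restrict s) := isFiniteMeasure_restrict.mpr hμs
  exact Integrable.of_bound (by fun_prop) 1
    (Filter.Eventually.of_forall fun x => (Complex.norm_exp_ofReal_mul_I _).le)

theorem mul_measureReal_le_re_setIntegral_exp_mul_I {φ : X → ℝ} (hφ : Measurable φ) {s : Set X}
    (hs : MeasurableSet s) (hμs : μ s ≠ ⊤) {c : ℝ} (hc : ∀ x ∈ s, c ≤ Real.cos (φ x)) :
    c * μ.real s ≤ (∫ x in s, Complex.exp (φ x * Complex.I) ∂μ).re := by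
  have hint := integrableOn_exp_mul_I hφ hμs
  have hcos : IntegrableOn (fun x => Real.cos (φ x)) s μ := by
    have := hint.re
    simp only [RCLike.re_to_complex, Complex.exp_ofReal_mul_I_re] at this
    exact this
  rw [← RCLike.re_to_complex, ← integral_re hint]
  simp only [RCLike.re_to_complex, Complex.exp_ofReal_mul_I_re]
  exact setIntegral_ge_of_const_le_real hs hμs hc hcos

theorem mul_sum_measureReal_le_norm_sum_setIntegral_exp_mul_I {ι : Type*} (F : Finset ι)
    {S : ι → Set X} {φ : X → ℝ} (hφ : Measurable φ) (hS : ∀ i ∈ F, MeasurableSet (S i))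
    (hμS : ∀ i ∈ F, μ (S i) ≠ ⊤) {c : ℝ} (hc : ∀ i ∈ F, ∀ x ∈ S i, c ≤ Real.cos (φ x)) :
    c * ∑ i ∈ F, μ.real (S i)
      ≤ ‖∑ i ∈ F, ∫ x in S i, Complex.exp (φ x * Complex.I) ∂μ‖ := calc
  c * ∑ i ∈ F, μ.real (S i) ≤ ∑ i ∈ F, (∫ x in S i, Complex.exp (φ x * Complex.I) ∂μ).re := by
    rw [Finset.mul_sum]
    exact Finset.sum_le_sum fun i hi =>
      mul_measureReal_le_re_setIntegral_exp_mul_I hφ (hS i hi) (hμS i hi) (hc i hi)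
  _ = (∑ i ∈ F, ∫ x in S i, Complex.exp (φ x * Complex.I) ∂μ).re := (Complex.re_sum _ _).symm
  _ ≤ _ := Complex.re_le_norm _

theorem norm_sum_setIntegral_exp_mul_I_le {ι : Type*} (F : Finset ι) {S : ι → Set X}
    (φ : X → ℝ) (hμS : ∀ i ∈ F, μ (S i) < ⊤) :
    ‖∑ i ∈ F, ∫ x in S i, Complex.exp (φ x * Complex.I) ∂μ‖ ≤ ∑ i ∈ F, μ.real (S i) := by
  refine (norm_sum_le _ _).trans (Finset.sum_le_sum fun i hi => ?_)
  simpa using norm_setIntegral_le_of_norm_le_const (C := 1) (hμS i hi)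
    fun x _ => (Complex.norm_exp_ofReal_mul_I (φ x)).le

end

theorem abs_phase_remainder_le {B δ u : ℝ} (hB : 0 < B) (hδ1 : δ ≤ 1) {p q ℓ : ℕ}
    (hp : p * δ * B ≤ 1 / 40) (hq : q * δ * B ^ 2 ≤ 1 / 80) (hℓ : (ℓ : ℝ) ≤ B) (hu : |u| ≤ δ) :
    |2 * π * (p * B * u - 2 * (q * ℓ * B * u) - q * B ^ 2 * u ^ 2)| ≤ π / 8 := by
  have h1 : p * B * |u| ≤ 1 / 40 := calc
    p * B * |u| ≤ p * B * δ := by gcongr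
    _ ≤ 1 / 40 := by linarith
  have h2 : q * ℓ * B * |u| ≤ 1 / 80 := calc
    q * ℓ * B * |u| ≤ q * B * B * δ := by gcongr
    _ = q * δ * B ^ 2 := by ring
    _ ≤ 1 / 80 := hq
  have h3 : q * B ^ 2 * u ^ 2 ≤ 1 / 80 := calc
    q * B ^ 2 * u ^ 2 ≤ q * B ^ 2 * δ := by
      gcongr
      rw [← sq_abs]
      nlinarith [abs_nonneg u]
    _ = q * δ * B ^ 2 := by ring
    _ ≤ 1 / 80 := hq
  have t1 := abs_sub (p * B * u - 2 * (q * ℓ * B * u)) (q * B ^ 2 * u ^ 2)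
  have t2 := abs_sub (p * B * u) (2 * (q * ℓ * B * u))
  simp only [abs_mul, Nat.abs_cast, abs_of_pos hB, abs_two, abs_pow, sq_abs] at t1 t2
  rw [abs_mul, abs_of_pos (by positivity)]
  nlinarith [Real.pi_pos]

theorem half_le_cos_phase {B δ : ℝ} (hB : 0 < B) (hδ1 : δ ≤ 1) {p q ℓ : ℕ}
    (hp : p * δ * B ≤ 1 / 40) (hq : q * δ * B ^ 2 ≤ 1 / 80) (hℓ : (ℓ : ℝ) ≤ B) {s : ℝ}
    (hs : |s - ℓ / B| ≤ δ) :
    1 / 2 ≤ Real.cos (-(π * (2 * q * B ^ 2) * s ^ 2) + 2 * π * (p * B * s)) := by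
  set u := s - ℓ / B
  have hphase : -(π * (2 * q * B ^ 2) * s ^ 2) + 2 * π * (p * B * s)
      = 2 * π * (p * B * u - 2 * (q * ℓ * B * u) - q * B ^ 2 * u ^ 2)
        + ((p * ℓ - q * ℓ ^ 2 : ℤ) : ℝ) * (2 * π) := by
    rw [show s = ℓ / B + u by ring]
    push_cast
    field_simp
    ring
  rw [hphase, Real.cos_add_int_mul_two_pi]
  apply half_le_cos_of_abs_le_pi_div_three
  linarith [abs_phase_remainder_le hB hδ1 hp hq hℓ hs, Real.pi_pos]

theorem mul_mul_rpow_neg_le {a c δ κ : ℝ} (hδ : 0 < δ) (h : a ≤ c * δ ^ (κ - 1)) :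
    a * δ * δ ^ (-κ) ≤ c := calc
  a * δ * δ ^ (-κ) ≤ c * δ ^ (κ - 1) * δ * δ ^ (-κ) := by gcongr
  _ = c := by
    rw [mul_assoc, mul_assoc, ← mul_assoc _ δ, ← Real.rpow_add_one hδ.ne', ← Real.rpow_add hδ]
    norm_num

noncomputable def schrodingerSol₁ (δ σ a t : ℝ) : ℂ :=
  ∫ s : ℝ, Complex.exp (((-(π * t * s ^ 2) + 2 * π * (a * s) : ℝ) : ℂ) * Complex.I)
    * ((g δ σ s : ℝ) : ℂ)

theorem schrodingerSol_eq_prod (n : ℕ) (δ σ : ℝ) (x : EuclideanSpace ℝ (Fin (n - 1))) (t : ℝ) :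
    schrodingerSol n δ σ x t = ∏ j, schrodingerSol₁ δ σ (x j) t := by
  have hphase : ∀ ξ : EuclideanSpace ℝ (Fin (n - 1)),
      -(π * t * ‖ξ‖ ^ 2) + 2 * π * inner ℝ x ξ
        = ∑ j, (-(π * t * ξ j ^ 2) + 2 * π * (x j * ξ j)) := by
    intro ξ
    simp only [EuclideanSpace.real_norm_sq_eq, PiLp.inner_apply, RCLike.inner_apply,
      conj_trivial, Finset.mul_sum, Finset.sum_add_distrib, Finset.sum_neg_distrib, mul_comm]
  simp_rw [schrodingerSol, hphase, Complex.ofReal_sum, Finset.sum_mul, Complex.exp_sum,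
    Complex.ofReal_prod, ← Finset.prod_mul_distrib]
  exact EuclideanSpace.integral_prod_apply fun j s =>
    Complex.exp (((-(π * t * s ^ 2) + 2 * π * (x j * s) : ℝ) : ℂ) * Complex.I) * ((g δ σ s : ℝ) : ℂ)

theorem schrodingerSol₁_eq_sum (δ σ a t : ℝ) :
    schrodingerSol₁ δ σ a t = ∑ ℓ ∈ Finset.Icc 1 ⌊δ ^ (-σ)⌋₊,
      ∫ s in Set.Ioo ((ℓ : ℝ) * δ ^ σ - δ) ((ℓ : ℝ) * δ ^ σ + δ),
        Complex.exp (((-(π * t * s ^ 2) + 2 * π * (a * s) : ℝ) : ℂ) * Complex.I) :=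
  integral_mul_sum_indicator_one _ (fun _ => measurableSet_Ioo)
    fun _ _ => integrableOn_exp_mul_I (by fun_prop) measure_Ioo_lt_top.ne

theorem norm_schrodingerSol₁_bounds {σ δ : ℝ} (hσ : 0 < σ) (hδ0 : 0 < δ) (hδ1 : δ < 1) {p q : ℕ}
    (hp : (p : ℝ) ≤ 1 / 40 * δ ^ (σ - 1)) (hq : (q : ℝ) ≤ 1 / 80 * δ ^ (2 * σ - 1)) :
    1 / 2 * δ ^ (1 - σ) ≤ ‖schrodingerSol₁ δ σ (p * δ ^ (-σ)) (2 * q * δ ^ (-(2 * σ)))‖ ∧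
      ‖schrodingerSol₁ δ σ (p * δ ^ (-σ)) (2 * q * δ ^ (-(2 * σ)))‖ ≤ 2 * δ ^ (1 - σ) := by
  set B := δ ^ (-σ) with hB
  have hB1 : 1 ≤ B := Real.one_le_rpow_of_pos_of_le_one_of_nonpos hδ0 hδ1.le (by linarith)
  have hA : δ ^ σ = B⁻¹ := by rw [hB, Real.rpow_neg hδ0.le, inv_inv]
  have hB2 : δ ^ (-(2 * σ)) = B ^ 2 := by
    rw [show -(2 * σ) = -σ * (2 : ℕ) by push_cast; ring, Real.rpow_mul_natCast hδ0.le]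
  have hsize : δ ^ (1 - σ) = B * δ := by
    rw [hB, ← Real.rpow_add_one hδ0.ne']
    ring_nf
  have hpB : p * δ * B ≤ 1 / 40 := mul_mul_rpow_neg_le hδ0 hp
  have hqB : q * δ * B ^ 2 ≤ 1 / 80 := hB2 ▸ mul_mul_rpow_neg_le hδ0 hq
  set N := ⌊B⌋₊
  have hN : B / 2 ≤ N ∧ (N : ℝ) ≤ B := ⟨Nat.half_le_floor hB1, Nat.floor_le (by linarith)⟩
  have hvol : ∑ ℓ ∈ Finset.Icc 1 N, volume.real (Set.Ioo ((ℓ : ℝ) * δ ^ σ - δ) (ℓ * δ ^ σ + δ))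
      = N * (2 * δ) := by
    have hlen : ∀ c : ℝ, volume.real (Set.Ioo (c - δ) (c + δ)) = 2 * δ := fun c => by
      rw [Real.volume_real_Ioo_of_le (by linarith)]
      ring
    simp only [hlen, Finset.sum_const, Nat.card_Icc, add_tsub_cancel_right, nsmul_eq_mul]
  have hcos : ∀ ℓ ∈ Finset.Icc 1 N, ∀ s ∈ Set.Ioo ((ℓ : ℝ) * δ ^ σ - δ) (ℓ * δ ^ σ + δ),
      1 / 2 ≤ Real.cos (-(π * (2 * q * δ ^ (-(2 * σ))) * s ^ 2) + 2 * π * (p * B * s)) := by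
    intro ℓ hℓ s hs
    rw [hB2]
    have hℓB : (ℓ : ℝ) ≤ B := le_trans (by exact_mod_cast (Finset.mem_Icc.mp hℓ).2) hN.2
    refine half_le_cos_phase (by linarith) hδ1.le hpB hqB hℓB ?_
    rw [hA, ← div_eq_mul_inv] at hs
    exact abs_le.mpr ⟨by linarith [hs.1], by linarith [hs.2]⟩
  rw [schrodingerSol₁_eq_sum, hsize]
  constructor
  · calc 1 / 2 * (B * δ) ≤ 1 / 2 * (N * (2 * δ)) := by nlinarith
      _ ≤ _ := hvol ▸ mul_sum_measureReal_le_norm_sum_setIntegral_exp_mul_I _ (by fun_prop)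
          (fun _ _ => measurableSet_Ioo) (fun _ _ => measure_Ioo_lt_top.ne) hcos
  · calc _ ≤ (N : ℝ) * (2 * δ) :=
          hvol ▸ norm_sum_setIntegral_exp_mul_I_le _ _ fun _ _ => measure_Ioo_lt_top
      _ ≤ 2 * (B * δ) := by nlinarith

theorem stmt4 :
    ∃ c C : ℝ, 0 < c ∧ 0 < C ∧
      ∀ n : ℕ, 2 ≤ n →
      ∀ σ δ : ℝ, 0 < σ → σ < 1/2 → 0 < δ → δ < 1 →
        2 * δ ^ (1 - σ) ≤ 1 → δ ^ (1 - σ) ≤ 1/40 →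
        ∀ x : EuclideanSpace ℝ (Fin (n-1)), ∀ t : ℝ,
          (∀ j, ∃ p : ℕ, (p : ℝ) ≤ (1/40) * δ ^ (σ - 1) ∧ x j = (p : ℝ) * δ ^ (-σ)) →
          (∃ q : ℕ, (q : ℝ) ≤ (1/80) * δ ^ (2*σ - 1) ∧ t = 2 * (q : ℝ) * δ ^ (-(2*σ))) →
          c ^ (n-1) * δ ^ (((n : ℝ) - 1) * (1 - σ)) ≤ ‖schrodingerSol n δ σ x t‖ ∧
          ‖schrodingerSol n δ σ x t‖ ≤ C ^ (n-1) * δ ^ (((n : ℝ) - 1) * (1 - σ)) := by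
  refine ⟨1 / 2, 2, by norm_num, by norm_num, ?_⟩
  intro n hn σ δ hσ _ hδ0 hδ1 _ _ x t hx ht
  obtain ⟨q, hq, rfl⟩ := ht
  choose p hp hxp using hx
  have hfactor : ∀ j, 1 / 2 * δ ^ (1 - σ) ≤ ‖schrodingerSol₁ δ σ (x j) (2 * q * δ ^ (-(2 * σ)))‖
      ∧ ‖schrodingerSol₁ δ σ (x j) (2 * q * δ ^ (-(2 * σ)))‖ ≤ 2 * δ ^ (1 - σ) := fun j => by
    rw [hxp j]
    exact norm_schrodingerSol₁_bounds hσ hδ0 hδ1 (hp j) hq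
  have hpow : δ ^ (((n : ℝ) - 1) * (1 - σ)) = (δ ^ (1 - σ)) ^ (n - 1) := by
    rw [← Nat.cast_pred (by omega), mul_comm, Real.rpow_mul_natCast hδ0.le]
  rw [schrodingerSol_eq_prod, norm_prod, hpow, ← mul_pow, ← mul_pow]
  constructor
  · simpa using Finset.prod_le_prod (s := Finset.univ) (f := fun _ => 1 / 2 * δ ^ (1 - σ))
      (fun _ _ => by positivity) fun j _ => (hfactor j).1
  · simpa using Finset.prod_le_prod (s := Finset.univ) (g := fun _ => 2 * δ ^ (1 - σ))
      (fun _ _ => norm_nonneg _) fun j _ => (hfactor j).2
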